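/- Let n ≥ 1 and let (C_j)_{j=0}^{n} be a Toeplitz nonnegative definite sequence of complex q×q matrices with rank T_n = rank T_{n−1}. Then there exists a finite subset N of 𝕋 such that the central measure μ corresponding to (C_j)_{j=0}^{n} satisfies μ(𝕋 \ N) = 0. -/

import Mathlib

open Matrix MeasureTheory Metric Filter Topology
open scoped ComplexOrder

/-- The block Toeplitz matrix `T_n = [C_{j-k}]_{j,k=0}^n`, with `C_{-j} := C_jᴴ`,
indexed so that block `(j,k)` sits at `((a,j),(b,k))`. -/
def blockToeplitz {ι : Type*} (C : ℕ → Matrix ι ι ℂ) (n : ℕ) :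
    Matrix (ι × Fin (n + 1)) (ι × Fin (n + 1)) ℂ :=
  fun x y =>
    if (y.2 : ℕ) ≤ (x.2 : ℕ) then C ((x.2 : ℕ) - (y.2 : ℕ)) x.1 y.1
    else (C ((y.2 : ℕ) - (x.2 : ℕ)))ᴴ x.1 y.1

/-- A sequence `(C_j)_{j=0}^κ` is Toeplitz nonnegative definite if each block
Toeplitz matrix `T_n`, `n ≤ κ`, is positive semidefinite. -/
def IsTNND {ι : Type*} [Fintype ι] (κ : ℕ∞) (C : ℕ → Matrix ι ι ℂ) : Prop :=
  ∀ n : ℕ, (n : ℕ∞) ≤ κ → (blockToeplitz C n).PosSemidef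

/-- `B` is the Moore–Penrose inverse of `A`: the four Penrose equations hold. -/
def IsMoorePenroseInv {m n : Type*} [Fintype m] [Fintype n]
    (A : Matrix m n ℂ) (B : Matrix n m ℂ) : Prop :=
  A * B * A = A ∧ B * A * B = B ∧ (A * B)ᴴ = A * B ∧ (B * A)ᴴ = B * A

open Classical in
/-- The Moore–Penrose inverse of a complex matrix (it always exists and is unique). -/
noncomputable def mpinv {m n : Type*} [Fintype m] [Fintype n]
    (A : Matrix m n ℂ) : Matrix n m ℂ :=
  if h : ∃ B, IsMoorePenroseInv A B then h.choose else 0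

/-- The block column `Y_m = col(C_1, …, C_m)`. -/
def Ymat {ι : Type*} (C : ℕ → Matrix ι ι ℂ) (m : ℕ) : Matrix (ι × Fin m) ι ℂ :=
  fun x b => C ((x.2 : ℕ) + 1) x.1 b

/-- The block row `Z_m = (C_m, C_{m-1}, …, C_1)`. -/
def Zmat {ι : Type*} (C : ℕ → Matrix ι ι ℂ) (m : ℕ) : Matrix ι (ι × Fin m) ℂ :=
  fun a y => C (m - (y.2 : ℕ)) a y.1

/-- The centers `M_1 = 0`, `M_{m+1} = Z_m T_{m-1}⁺ Y_m` of the matrix balls. -/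
noncomputable def Mseq {ι : Type*} [Fintype ι] (C : ℕ → Matrix ι ι ℂ) :
    ℕ → Matrix ι ι ℂ
  | 0 => 0
  | 1 => 0
  | (k + 2) => Zmat C (k + 1) * mpinv (blockToeplitz C k) * Ymat C (k + 1)

/-- A sequence `(C_j)_{j=0}^κ` is central of order `k` if `C_j = M_j` for all
`k ≤ j ≤ κ`. -/
def IsCentralOfOrder {ι : Type*} [Fintype ι] (κ : ℕ∞) (k : ℕ)
    (C : ℕ → Matrix ι ι ℂ) : Prop :=
  ∀ j : ℕ, k ≤ j → (j : ℕ∞) ≤ κ → C j = Mseq C j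

/-!
Rank stagnation `rank T_n = rank T_{n-1}` makes the last block column of `T_n` a combination of
the earlier ones, so `T_n V = 0` for a block column `V = col(V_0, …, V_n)` with `V_n = I`.
Since `T_n = ∫ W(ζ)ᴴ g(ζ) W(ζ) dν` with `W(ζ) = [I, ζI, …, ζⁿI]` (`blockPowerRow`), the
matrix polynomial `P(ζ) = W(ζ) V = ∑ V_k ζ^k` (`blockPolynomial V`) gives nonnegative quadratic
forms `P(ζ)ᴴ g(ζ) P(ζ)` with zero integral, hence `g(ζ) P(ζ) = 0` for `ν`-a.e. `ζ`. As `P` is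
monic of degree `n`, `det P` is a nonzero polynomial, and `g` vanishes a.e. off its finitely
many roots.
-/

open Polynomial

theorem Complex.star_pow_mul_pow_of_norm_eq_one {z : ℂ} (hz : ‖z‖ = 1) (j k : ℕ) :
    star z ^ j * z ^ k = z ^ ((k : ℤ) - j) := by
  have hz0 : z ≠ 0 := norm_ne_zero_iff.mp (by rw [hz]; exact one_ne_zero)
  rw [Complex.star_def, ← RCLike.inv_eq_conj hz, zpow_sub₀ hz0, zpow_natCast, zpow_natCast,
    inv_pow, div_eq_mul_inv, mul_comm]

theorem Complex.ae_eq_zero_of_integral_eq_zero {α : Type*} [MeasurableSpace α] {μ : Measure α}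
    {f : α → ℂ} (hf : 0 ≤ᵐ[μ] f) (hfi : Integrable f μ) (h : ∫ x, f x ∂μ = 0) : f =ᵐ[μ] 0 := by
  have hre : (fun x => (f x).re) =ᵐ[μ] 0 := by
    refine (integral_eq_zero_iff_of_nonneg_ae ?_ hfi.re).mp ?_
    · filter_upwards [hf] with x hx using (Complex.nonneg_iff.mp hx).1
    · rw [integral_re hfi, h, map_zero]
  filter_upwards [hf, hre] with x hx hx'
  exact Complex.ext hx' (Complex.nonneg_iff.mp hx).2.symm

section MatrixIntegral

variable {α m n : Type*} [MeasurableSpace α] {μ : Measure α} [Fintype m] [Fintype n]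
  {M : α → Matrix m n ℂ}

theorem integrable_dotProduct_mulVec (hM : ∀ i j, Integrable (fun x => M x i j) μ)
    (u : m → ℂ) (v : n → ℂ) : Integrable (fun x => u ⬝ᵥ M x *ᵥ v) μ := by
  simp only [dotProduct, mulVec, Finset.mul_sum]
  exact integrable_finsetSum _ fun i _ => integrable_finsetSum _ fun j _ =>
    ((hM i j).mul_const _).const_mul _

theorem integral_dotProduct_mulVec (hM : ∀ i j, Integrable (fun x => M x i j) μ)
    (u : m → ℂ) (v : n → ℂ) :
    ∫ x, u ⬝ᵥ M x *ᵥ v ∂μ = u ⬝ᵥ (of fun i j => ∫ x, M x i j ∂μ) *ᵥ v := by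
  simp only [dotProduct, mulVec, Finset.mul_sum, of_apply]
  rw [integral_finsetSum _ fun i _ => integrable_finsetSum _ fun j _ =>
    ((hM i j).mul_const _).const_mul _]
  refine Finset.sum_congr rfl fun i _ => ?_
  rw [integral_finsetSum _ fun j _ => ((hM i j).mul_const _).const_mul _]
  refine Finset.sum_congr rfl fun j _ => ?_
  rw [integral_const_mul, integral_mul_const]

end MatrixIntegral

namespace Matrix

variable {m m' K : Type*} [Field K] [Fintype m] [Fintype m'] [DecidableEq m]

theorem exists_mulVec_eq_zero_of_rank_submatrix_eq (A : Matrix m m K) (f : m' → m)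
    (h : (A.submatrix f f).rank = A.rank) (i : m) :
    ∃ x, A *ᵥ x = 0 ∧ ∀ j ∉ Set.range f, x j = (Pi.single i 1 : m → K) j := by
  -- `E *ᵥ v` extends `v` by zero off the range of `f`; the rank hypothesis makes the columns
  -- `A * E` of `A` indexed by `f` span the whole column space of `A`.
  set E : Matrix m m' K := (1 : Matrix m m K).submatrix id f
  have hAE : A * E = A.submatrix id f := by
    ext j k
    simp [E, Matrix.mul_apply, Matrix.one_apply]
  have hle : LinearMap.range (A * E).mulVecLin ≤ LinearMap.range A.mulVecLin := by
    rw [Matrix.mulVecLin_mul]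
    exact LinearMap.range_comp_le_range _ _
  have hrank : A.rank ≤ (A * E).rank := by
    have := rank_submatrix_le (A.submatrix id f) f id
    rwa [submatrix_submatrix, Function.id_comp, Function.comp_id, h, ← hAE] at this
  obtain ⟨v, hv⟩ : A *ᵥ Pi.single i 1 ∈ LinearMap.range (A * E).mulVecLin := by
    rw [Submodule.eq_of_le_of_finrank_le hle hrank]
    exact ⟨_, rfl⟩
  refine ⟨Pi.single i 1 - E *ᵥ v, ?_, fun j hj => ?_⟩
  · rw [mulVec_sub, mulVec_mulVec, ← hv, mulVecLin_apply, sub_self]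
  · have hE : (E *ᵥ v) j = 0 :=
      Finset.sum_eq_zero fun k _ => by
        simp [E, show j ≠ f k from fun h => hj ⟨k, h.symm⟩]
    rw [Pi.sub_apply, hE, sub_zero]

theorem exists_mul_eq_zero_of_rank_submatrix_castSucc_eq {ι K : Type*} [Field K]
    [Fintype ι] [DecidableEq ι] {n : ℕ} (A : Matrix (ι × Fin (n + 1)) (ι × Fin (n + 1)) K)
    (h : (A.submatrix (Prod.map id Fin.castSucc) (Prod.map id Fin.castSucc)).rank = A.rank) :
    ∃ V : Matrix (ι × Fin (n + 1)) ι K,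
      A * V = 0 ∧ ∀ a b, V (a, Fin.last n) b = (1 : Matrix ι ι K) a b := by
  choose x hx hlast using fun b => A.exists_mulVec_eq_zero_of_rank_submatrix_eq _ h (b, Fin.last n)
  refine ⟨of fun p b => x b p, ?_, fun a b => ?_⟩
  · ext p b
    exact congrFun (hx b) p
  · have hnot : (a, Fin.last n) ∉ Set.range (Prod.map id Fin.castSucc) := by
      rintro ⟨⟨c, k⟩, hk⟩
      exact Fin.castSucc_ne_last k (congrArg Prod.snd hk)
    rw [of_apply, hlast b _ hnot, Pi.single_apply, one_apply]
    simp [Prod.ext_iff]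

end Matrix

theorem Matrix.coeff_det_of_natDegree_le {ι R : Type*} [Fintype ι] [DecidableEq ι] [CommRing R]
    (Q : Matrix ι ι R[X]) {n : ℕ} (h : ∀ i j, (Q i j).natDegree ≤ n) :
    Q.det.coeff (Fintype.card ι * n) = (Q.map fun p => p.coeff n).det := by
  simp only [det_apply, finsetSum_coeff, Units.smul_def, coeff_smul, map_apply]
  refine Finset.sum_congr rfl fun σ _ => ?_
  exact congrArg _ (coeff_prod_of_natDegree_le _ _ _ fun i _ => h _ _)

section BlockPowerRow

variable {ι κ R : Type*} [Fintype ι] [DecidableEq ι] [CommRing R]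

def blockPowerRow (ι : Type*) [DecidableEq ι] (n : ℕ) (z : R) : Matrix ι (ι × Fin (n + 1)) R :=
  of fun a p => if p.1 = a then z ^ (p.2 : ℕ) else 0

theorem blockPowerRow_mul_apply {n : ℕ} (z : R) (V : Matrix (ι × Fin (n + 1)) κ R) (a : ι)
    (b : κ) : (blockPowerRow ι n z * V) a b = ∑ k : Fin (n + 1), z ^ (k : ℕ) * V (a, k) b := by
  simp [blockPowerRow, mul_apply, Fintype.sum_prod_type]

noncomputable def blockPolynomial {n : ℕ} (V : Matrix (ι × Fin (n + 1)) κ R) : Matrix ι κ R[X] :=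
  blockPowerRow ι n (X : R[X]) * V.map C

theorem blockPolynomial_map_eval {n : ℕ} (V : Matrix (ι × Fin (n + 1)) κ R) (z : R) :
    (blockPolynomial V).map (eval z) = blockPowerRow ι n z * V := by
  rw [blockPolynomial, ← coe_evalRingHom, Matrix.map_mul]
  congr
  · ext a p
    simp only [blockPowerRow, map_apply, of_apply]
    split_ifs <;> simp
  · ext p b
    simp

theorem det_blockPolynomial_ne_zero [Nontrivial R] {n : ℕ} (V : Matrix (ι × Fin (n + 1)) ι R)
    (hV : ∀ a b, V (a, Fin.last n) b = (1 : Matrix ι ι R) a b) :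
    (blockPolynomial V).det ≠ 0 := by
  have hdeg : ∀ a b, (blockPolynomial V a b).natDegree ≤ n := fun a b => by
    rw [blockPolynomial, blockPowerRow_mul_apply]
    exact natDegree_sum_le_of_forall_le _ _ fun k _ =>
      (natDegree_mul_C_le _ _).trans ((natDegree_X_pow_le _).trans (Fin.is_le k))
  have hcoeff : (blockPolynomial V).map (fun p => p.coeff n) = 1 := by
    ext a b
    rw [map_apply, blockPolynomial, blockPowerRow_mul_apply, finsetSum_coeff,
      Fintype.sum_eq_single (Fin.last n)]
    · simp [hV]
    · intro k hk
      simp [show n ≠ k from fun h => hk (Fin.ext h.symm)]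
  intro h
  simpa [h, hcoeff] using coeff_det_of_natDegree_le _ hdeg

variable [StarRing R]

theorem conjTranspose_blockPowerRow_mul_mul_apply {n : ℕ} (z : R) (M : Matrix ι ι R)
    (a b : ι) (j k : Fin (n + 1)) :
    ((blockPowerRow ι n z)ᴴ * M * blockPowerRow ι n z) (a, j) (b, k) =
      star z ^ (j : ℕ) * M a b * z ^ (k : ℕ) := by
  simp [blockPowerRow, mul_apply, apply_ite star, star_pow]

end BlockPowerRow

theorem blockToeplitz_submatrix_castSucc {ι : Type*} (C : ℕ → Matrix ι ι ℂ) (n : ℕ) :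
    (blockToeplitz C (n + 1)).submatrix (Prod.map id Fin.castSucc) (Prod.map id Fin.castSucc) =
      blockToeplitz C n :=
  rfl

section UnitCircle

variable {ι : Type*} [Fintype ι] [DecidableEq ι] {ν : Measure ℂ} {g : ℂ → Matrix ι ι ℂ}
  {C : ℕ → Matrix ι ι ℂ} {n : ℕ}

theorem ae_norm_eq_one_of_measure_compl_sphere_eq_zero (hν : ν (sphere (0 : ℂ) 1)ᶜ = 0) :
    ∀ᵐ ζ ∂ν, ‖ζ‖ = 1 := by
  filter_upwards [measure_eq_zero_iff_ae_notMem.mp hν] with ζ hζ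
  simpa using hζ

theorem MeasureTheory.Integrable.star_pow_mul_mul_pow {f : ℂ → ℂ} (hcircle : ∀ᵐ ζ ∂ν, ‖ζ‖ = 1)
    (hf : Integrable f ν) (j k : ℕ) : Integrable (fun ζ => star ζ ^ j * f ζ * ζ ^ k) ν := by
  refine hf.mono (by fun_prop) ?_
  filter_upwards [hcircle] with ζ hζ
  simp [hζ]

theorem integral_conjTranspose_blockPowerRow_mul_mul
    (hcircle : ∀ᵐ ζ ∂ν, ‖ζ‖ = 1) (hherm : ∀ᵐ ζ ∂ν, (g ζ).IsHermitian)
    (hF : ∀ j ≤ n, ∀ a b, ∫ ζ, ζ ^ (-(j : ℤ)) * g ζ a b ∂ν = C j a b)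
    (p r : ι × Fin (n + 1)) :
    ∫ ζ, ((blockPowerRow ι n ζ)ᴴ * g ζ * blockPowerRow ι n ζ) p r ∂ν = blockToeplitz C n p r := by
  obtain ⟨a, j⟩ := p
  obtain ⟨b, k⟩ := r
  simp only [conjTranspose_blockPowerRow_mul_mul_apply, blockToeplitz]
  split_ifs with hkj
  · rw [← hF (j - k) (by omega)]
    refine integral_congr_ae ?_
    filter_upwards [hcircle] with ζ hζ
    rw [mul_right_comm, Complex.star_pow_mul_pow_of_norm_eq_one hζ, Nat.cast_sub hkj, neg_sub]
  · rw [conjTranspose_apply, ← hF (k - j) (by omega)]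
    refine (integral_congr_ae ?_).trans integral_conj
    filter_upwards [hcircle, hherm] with ζ hζ hgζ
    rw [map_mul, map_zpow₀, ← RCLike.inv_eq_conj hζ, _root_.inv_zpow', neg_neg,
      ← Complex.star_def, hgζ.apply, mul_right_comm,
      Complex.star_pow_mul_pow_of_norm_eq_one hζ, Nat.cast_sub (le_of_not_ge hkj), mul_comm]

theorem ae_mulVec_blockPowerRow_mulVec_eq_zero (hcircle : ∀ᵐ ζ ∂ν, ‖ζ‖ = 1)
    (hg : ∀ a b, Integrable (fun ζ => g ζ a b) ν) (hpsd : ∀ᵐ ζ ∂ν, (g ζ).PosSemidef)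
    (hF : ∀ j ≤ n, ∀ a b, ∫ ζ, ζ ^ (-(j : ℤ)) * g ζ a b ∂ν = C j a b)
    {x : ι × Fin (n + 1) → ℂ} (hx : blockToeplitz C n *ᵥ x = 0) :
    ∀ᵐ ζ ∂ν, g ζ *ᵥ (blockPowerRow ι n ζ *ᵥ x) = 0 := by
  set M : ℂ → Matrix (ι × Fin (n + 1)) (ι × Fin (n + 1)) ℂ :=
    fun ζ => (blockPowerRow ι n ζ)ᴴ * g ζ * blockPowerRow ι n ζ
  have hM : ∀ p r, Integrable (fun ζ => M ζ p r) ν := by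
    rintro ⟨a, j⟩ ⟨b, k⟩
    simp only [M, conjTranspose_blockPowerRow_mul_mul_apply]
    exact (hg a b).star_pow_mul_mul_pow hcircle j k
  have hquad : ∀ ζ, star (blockPowerRow ι n ζ *ᵥ x) ⬝ᵥ g ζ *ᵥ (blockPowerRow ι n ζ *ᵥ x) =
      star x ⬝ᵥ M ζ *ᵥ x := fun ζ => by
    rw [star_mulVec, ← dotProduct_mulVec]
    simp only [M, mulVec_mulVec, Matrix.mul_assoc]
  have hmoments : (of fun p r => ∫ ζ, M ζ p r ∂ν) = blockToeplitz C n := by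
    ext p r
    exact integral_conjTranspose_blockPowerRow_mul_mul hcircle (hpsd.mono fun _ h => h.isHermitian)
      hF p r
  have hintegral : ∫ ζ, star x ⬝ᵥ M ζ *ᵥ x ∂ν = 0 := by
    rw [integral_dotProduct_mulVec hM, hmoments, hx, dotProduct_zero]
  have hnonneg : 0 ≤ᵐ[ν] fun ζ => star x ⬝ᵥ M ζ *ᵥ x := by
    filter_upwards [hpsd] with ζ hζ
    rw [Pi.zero_apply, ← hquad]
    exact hζ.dotProduct_mulVec_nonneg _
  filter_upwards [Complex.ae_eq_zero_of_integral_eq_zero hnonneg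
    (integrable_dotProduct_mulVec hM _ _) hintegral, hpsd] with ζ hζ0 hζ
  exact (hζ.dotProduct_mulVec_zero_iff _).mp ((hquad ζ).trans hζ0)

theorem ae_mul_blockPowerRow_mul_eq_zero (hcircle : ∀ᵐ ζ ∂ν, ‖ζ‖ = 1)
    (hg : ∀ a b, Integrable (fun ζ => g ζ a b) ν) (hpsd : ∀ᵐ ζ ∂ν, (g ζ).PosSemidef)
    (hF : ∀ j ≤ n, ∀ a b, ∫ ζ, ζ ^ (-(j : ℤ)) * g ζ a b ∂ν = C j a b)
    {V : Matrix (ι × Fin (n + 1)) ι ℂ} (hV : blockToeplitz C n * V = 0) :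
    ∀ᵐ ζ ∂ν, g ζ * (blockPowerRow ι n ζ * V) = 0 := by
  have hcol : ∀ b, blockToeplitz C n *ᵥ (fun p => V p b) = 0 := fun b => by
    ext p
    exact congrFun (congrFun hV p) b
  filter_upwards [ae_all_iff.mpr fun b =>
    ae_mulVec_blockPowerRow_mulVec_eq_zero hcircle hg hpsd hF (hcol b)] with ζ hζ
  ext a b
  exact congrFun (hζ b) a

theorem exists_finset_setIntegral_compl_eq_zero_of_ae_mul_eq_zero {Q : Matrix ι ι ℂ[X]}
    (hQ : Q.det ≠ 0) (hcircle : ∀ᵐ ζ ∂ν, ‖ζ‖ = 1) (hgQ : ∀ᵐ ζ ∂ν, g ζ * Q.map (eval ζ) = 0) :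
    ∃ N : Finset ℂ, ↑N ⊆ sphere (0 : ℂ) 1 ∧ ∀ a b, ∫ ζ in (↑N : Set ℂ)ᶜ, g ζ a b ∂ν = 0 := by
  classical
  refine ⟨Q.det.roots.toFinset.filter (· ∈ sphere (0 : ℂ) 1),
    fun z hz => (Finset.mem_filter.mp hz).2, fun a b => setIntegral_eq_zero_of_ae_eq_zero ?_⟩
  filter_upwards [hcircle, hgQ] with ζ hζ hgζ hζN
  have hdet : IsUnit (Q.map (eval ζ)).det := by
    rw [← coe_evalRingHom, ← RingHom.mapMatrix_apply, ← RingHom.map_det, isUnit_iff_ne_zero]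
    intro hroot
    exact hζN (Finset.mem_filter.mpr ⟨Multiset.mem_toFinset.mpr ((mem_roots hQ).mpr hroot),
      mem_sphere_zero_iff_norm.mpr hζ⟩)
  rw [((isUnit_iff_isUnit_det _).mpr hdet).mul_left_eq_zero.mp hgζ, Matrix.zero_apply]

end UnitCircle

theorem central_measure_concentrated_of_rank_stagnation_general (q n : ℕ) (hn : 1 ≤ n)
    (C : ℕ → Matrix (Fin q) (Fin q) ℂ)
    (hrank : (blockToeplitz C n).rank = (blockToeplitz C (n - 1)).rank)
    (Cext : ℕ → Matrix (Fin q) (Fin q) ℂ)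
    (hext : ∀ j ≤ n, Cext j = C j)
    (ν : Measure ℂ) (hν : ν ((sphere (0 : ℂ) 1)ᶜ) = 0)
    (g : ℂ → Matrix (Fin q) (Fin q) ℂ)
    (hg : ∀ a b, Integrable (fun z => g z a b) ν)
    (hpsd : ∀ᵐ z ∂ν, (g z).PosSemidef)
    (hFourier : ∀ j : ℕ, ∀ a b,
      (∫ ζ, ζ ^ (-(j : ℤ)) * g ζ a b ∂ν) = Cext j a b) :
    ∃ N : Finset ℂ, ↑N ⊆ sphere (0 : ℂ) 1 ∧
      ∀ a b, (∫ ζ in (↑N : Set ℂ)ᶜ, g ζ a b ∂ν) = 0 := by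
  obtain ⟨m, rfl⟩ : ∃ m, n = m + 1 := ⟨n - 1, by omega⟩
  obtain ⟨V, hTV, hV⟩ := (blockToeplitz C (m + 1)).exists_mul_eq_zero_of_rank_submatrix_castSucc_eq
    (by rw [blockToeplitz_submatrix_castSucc, hrank, Nat.add_sub_cancel])
  have hF : ∀ j ≤ m + 1, ∀ a b, ∫ ζ, ζ ^ (-(j : ℤ)) * g ζ a b ∂ν = C j a b :=
    fun j hj a b => by rw [hFourier, hext j hj]
  have hcircle := ae_norm_eq_one_of_measure_compl_sphere_eq_zero hν
  refine exists_finset_setIntegral_compl_eq_zero_of_ae_mul_eq_zero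
    (det_blockPolynomial_ne_zero V hV) hcircle ?_
  simpa only [blockPolynomial_map_eval] using
    ae_mul_blockPowerRow_mul_eq_zero hcircle hg hpsd hF hTV

/-- If `(C_j)_{j=0}^n` (`n ≥ 1`) is Toeplitz nonnegative definite with
`rank T_n = rank T_{n-1}`, then the central measure corresponding to
`(C_j)_{j=0}^n` — i.e. the positive semidefinite matrix measure (encoded by a
finite positive measure `ν` supported on the unit circle and a `ν`-a.e. positive
semidefinite integrable matrix density `g`) whose Fourier coefficients are the
central sequence extending `(C_j)_{j=0}^n` — is concentrated on a finite subset of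
the circle. -/
theorem central_measure_concentrated_of_rank_stagnation (q n : ℕ) (hn : 1 ≤ n)
    (C : ℕ → Matrix (Fin q) (Fin q) ℂ)
    (hC : IsTNND (n : ℕ∞) C)
    (hrank : (blockToeplitz C n).rank = (blockToeplitz C (n - 1)).rank)
    (Cext : ℕ → Matrix (Fin q) (Fin q) ℂ)
    (hext : ∀ j ≤ n, Cext j = C j)
    (hcentral : ∀ j, n < j → Cext j = Mseq Cext j)
    (ν : Measure ℂ) [IsFiniteMeasure ν] (hν : ν ((sphere (0 : ℂ) 1)ᶜ) = 0)
    (g : ℂ → Matrix (Fin q) (Fin q) ℂ)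
    (hg : ∀ a b, Integrable (fun z => g z a b) ν)
    (hpsd : ∀ᵐ z ∂ν, (g z).PosSemidef)
    (hFourier : ∀ j : ℕ, ∀ a b,
      (∫ ζ, ζ ^ (-(j : ℤ)) * g ζ a b ∂ν) = Cext j a b) :
    ∃ N : Finset ℂ, ↑N ⊆ sphere (0 : ℂ) 1 ∧
      ∀ a b, (∫ ζ in (↑N : Set ℂ)ᶜ, g ζ a b ∂ν) = 0 :=
  central_measure_concentrated_of_rank_stagnation_general q n hn C hrank Cext hext ν hν g hg hpsd
    hFourier
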